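/- Let t ≥ 2 be an integer, θ ∈ (0,1], k₀ ∈ ℝ, and positive reals ρ₁, …, ρ_t satisfying: θ(k+k₀+1) ≥ 1 for all 2 ≤ k ≤ t; (θ(k+k₀+1) − 1)/ρ_{k−1} ≥ (θ(k+k₀+2) − 1)/ρ_k for all 2 ≤ k ≤ t−1; and (θ(t+k₀+1) − 1)/ρ_{t−1} ≥ (t+k₀+1)/ρ_t. Then for any vectors λ¹, …, λ^{t+1}, λ ∈ ℝ^p: −((t+k₀+1)/ρ_t) Δ(λ^{t+1}, λ^t, λ) − ∑_{k=2}^t ((θ(k+k₀+1) − 1)/ρ_{k−1}) Δ(λ^k, λ^{k−1}, λ) ≤ ((θ(k₀+3) − 1)/(2ρ₁)) ‖λ¹ − λ‖². -/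

import Mathlib

/-!
Dropping the nonnegative term `‖v⁺ - v°‖²` gives `Δ(λᵏ, λᵏ⁻¹, λ) ≥ (aₖ - aₖ₋₁)/2` with
`aₖ = ‖λᵏ - λ‖²`. The hypotheses make the coefficients `c₂, …, c_{t+1}` of the `Δ`'s nonincreasing
with `c_{t+1} ≥ 0`, so by Abel summation `∑ cₖ (aₖ₋₁ - aₖ) ≤ c₂ a₁ - c_{t+1} a_{t+1}
≤ c₂ a₁`.
-/

/-- `Δ(v⁺, v°, v) = (1/2)(‖v⁺ − v‖² − ‖v° − v‖² + ‖v⁺ − v°‖²)`. -/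
noncomputable def Delta {E : Type*} [NormedAddCommGroup E]
    (vp vo v : E) : ℝ :=
  1 / 2 * (‖vp - v‖ ^ 2 - ‖vo - v‖ ^ 2 + ‖vp - vo‖ ^ 2)

open Finset

lemma half_sub_sq_norm_le_Delta {E : Type*} [NormedAddCommGroup E] (vp vo v : E) :
    (‖vp - v‖ ^ 2 - ‖vo - v‖ ^ 2) / 2 ≤ Delta vp vo v := by
  unfold Delta
  nlinarith [sq_nonneg ‖vp - vo‖]

lemma sum_Icc_mul_sub_le_of_antitoneOn {c a : ℕ → ℝ} {m n : ℕ} (hmn : m < n)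
    (ha : ∀ k, 0 ≤ a k) (hc : AntitoneOn c (Set.Icc (m + 1) n)) :
    ∑ k ∈ Icc (m + 1) n, c k * (a (k - 1) - a k) ≤ c (m + 1) * a m - c n * a n := by
  induction n, hmn using Nat.le_induction with
  | base => simp [mul_sub]
  | succ n hmn ih =>
    have hcn : c (n + 1) ≤ c n :=
      hc ⟨hmn, n.le_succ⟩ ⟨by omega, le_rfl⟩ n.le_succ
    rw [sum_Icc_succ_top (by omega), Nat.add_sub_cancel]
    have := ih (hc.mono (Set.Icc_subset_Icc_right n.le_succ))
    nlinarith [ha n]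

lemma neg_sum_mul_Delta_le {E : Type*} [NormedAddCommGroup E] {c : ℕ → ℝ} {m n : ℕ}
    (hmn : m < n) (hc : AntitoneOn c (Set.Icc (m + 1) n)) (hcn : 0 ≤ c n) (x : ℕ → E) (v : E) :
    -∑ k ∈ Icc (m + 1) n, c k * Delta (x k) (x (k - 1)) v ≤ c (m + 1) / 2 * ‖x m - v‖ ^ 2 := by
  have hterm : ∀ k ∈ Icc (m + 1) n,
      -(c k * Delta (x k) (x (k - 1)) v) ≤ c k * (‖x (k - 1) - v‖ ^ 2 - ‖x k - v‖ ^ 2) / 2 := by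
    intro k hk
    have hck : 0 ≤ c k := hcn.trans (hc (mem_Icc.1 hk) ⟨by grind, le_rfl⟩ (mem_Icc.1 hk).2)
    have := mul_le_mul_of_nonneg_left (half_sub_sq_norm_le_Delta (x k) (x (k - 1)) v) hck
    linarith
  have hsum := sum_le_sum hterm
  rw [sum_neg_distrib, ← sum_div] at hsum
  have htele := sum_Icc_mul_sub_le_of_antitoneOn hmn (fun k => sq_nonneg ‖x k - v‖) hc
  nlinarith [mul_nonneg hcn (sq_nonneg ‖x n - v‖)]

/-- The coefficient of `Delta (x k) (x (k - 1)) v` on the left-hand side, for `2 ≤ k ≤ t + 1`. -/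
noncomputable def deltaWeight (t : ℕ) (θ k₀ : ℝ) (ρ : ℕ → ℝ) (k : ℕ) : ℝ :=
  if k = t + 1 then ((t : ℝ) + k₀ + 1) / ρ t else (θ * ((k : ℝ) + k₀ + 1) - 1) / ρ (k - 1)

lemma deltaWeight_of_ne {t k : ℕ} {θ k₀ : ℝ} {ρ : ℕ → ℝ} (hk : k ≠ t + 1) :
    deltaWeight t θ k₀ ρ k = (θ * ((k : ℝ) + k₀ + 1) - 1) / ρ (k - 1) :=
  if_neg hk

lemma deltaWeight_last {t : ℕ} {θ k₀ : ℝ} {ρ : ℕ → ℝ} :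
    deltaWeight t θ k₀ ρ (t + 1) = ((t : ℝ) + k₀ + 1) / ρ t :=
  if_pos rfl

lemma antitoneOn_deltaWeight {t : ℕ} {θ k₀ : ℝ} {ρ : ℕ → ℝ}
    (hρmono : ∀ k : ℕ, 2 ≤ k → k ≤ t - 1 →
      (θ * ((k : ℝ) + k₀ + 2) - 1) / ρ k ≤ (θ * ((k : ℝ) + k₀ + 1) - 1) / ρ (k - 1))
    (hρt : ((t : ℝ) + k₀ + 1) / ρ t ≤ (θ * ((t : ℝ) + k₀ + 1) - 1) / ρ (t - 1)) :
    AntitoneOn (deltaWeight t θ k₀ ρ) (Set.Icc 2 (t + 1)) := by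
  refine antitoneOn_of_succ_le Set.ordConnected_Icc fun k _ hk hk' => ?_
  simp only [Order.succ_eq_add_one, Set.mem_Icc] at hk hk' ⊢
  rcases eq_or_ne k t with rfl | hkt
  · rwa [deltaWeight_last, deltaWeight_of_ne (by omega)]
  · have hshift : θ * (((k + 1 : ℕ) : ℝ) + k₀ + 1) = θ * ((k : ℝ) + k₀ + 2) := by
      push_cast
      ring
    rw [deltaWeight_of_ne (by omega), deltaWeight_of_ne (by omega), Nat.add_sub_cancel, hshift]
    exact hρmono k hk.1 (by omega)

lemma deltaWeight_last_nonneg {t : ℕ} {θ k₀ : ℝ} {ρ : ℕ → ℝ} (hθ0 : 0 < θ) (hρt : 0 < ρ t)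
    (hθt : 1 ≤ θ * ((t : ℝ) + k₀ + 1)) : 0 ≤ deltaWeight t θ k₀ ρ (t + 1) := by
  have : 0 < (t : ℝ) + k₀ + 1 := pos_of_mul_pos_right (by linarith) hθ0.le
  rw [deltaWeight_last]
  positivity

theorem stmt_10_general
    {p : ℕ}
    (t : ℕ) (ht : 2 ≤ t)
    (θ : ℝ) (hθ0 : 0 < θ)
    (k₀ : ℝ)
    (ρ : ℕ → ℝ) (hρpos : ∀ k : ℕ, 1 ≤ k → k ≤ t → 0 < ρ k)
    (hθk : ∀ k : ℕ, 2 ≤ k → k ≤ t → 1 ≤ θ * ((k : ℝ) + k₀ + 1))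
    (hρmono : ∀ k : ℕ, 2 ≤ k → k ≤ t - 1 →
      (θ * ((k : ℝ) + k₀ + 2) - 1) / ρ k ≤ (θ * ((k : ℝ) + k₀ + 1) - 1) / ρ (k - 1))
    (hρt : ((t : ℝ) + k₀ + 1) / ρ t ≤ (θ * ((t : ℝ) + k₀ + 1) - 1) / ρ (t - 1))
    (lamseq : ℕ → EuclideanSpace ℝ (Fin p)) (lam : EuclideanSpace ℝ (Fin p)) :
    -(((t : ℝ) + k₀ + 1) / ρ t) * Delta (lamseq (t + 1)) (lamseq t) lam
      - (∑ k ∈ Finset.Icc 2 t, (θ * ((k : ℝ) + k₀ + 1) - 1) / ρ (k - 1) *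
            Delta (lamseq k) (lamseq (k - 1)) lam)
    ≤ (θ * (k₀ + 3) - 1) / (2 * ρ 1) * ‖lamseq 1 - lam‖ ^ 2 := by
  have hsum : ∑ k ∈ Icc 2 t, (θ * ((k : ℝ) + k₀ + 1) - 1) / ρ (k - 1) *
      Delta (lamseq k) (lamseq (k - 1)) lam =
      ∑ k ∈ Icc 2 t, deltaWeight t θ k₀ ρ k * Delta (lamseq k) (lamseq (k - 1)) lam :=
    sum_congr rfl fun k hk => by rw [deltaWeight_of_ne (by grind)]
  have hweight2 : deltaWeight t θ k₀ ρ 2 / 2 = (θ * (k₀ + 3) - 1) / (2 * ρ 1) := by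
    rw [deltaWeight_of_ne (by omega), Nat.cast_ofNat, show 2 - 1 = 1 from rfl]
    ring
  have key := neg_sum_mul_Delta_le (m := 1) (by omega) (antitoneOn_deltaWeight hρmono hρt)
    (deltaWeight_last_nonneg hθ0 (hρpos t (by omega) le_rfl) (hθk t ht le_rfl)) lamseq lam
  rw [sum_Icc_succ_top (by omega), hweight2, ← hsum, deltaWeight_last, Nat.add_sub_cancel] at key
  linarith

/-- Proposition B.2 of the paper. -/
theorem stmt_10
    {p : ℕ}
    (t : ℕ) (ht : 2 ≤ t)
    (θ : ℝ) (hθ0 : 0 < θ) (hθ1 : θ ≤ 1)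
    (k₀ : ℝ)
    (ρ : ℕ → ℝ) (hρpos : ∀ k : ℕ, 1 ≤ k → k ≤ t → 0 < ρ k)
    (hθk : ∀ k : ℕ, 2 ≤ k → k ≤ t → 1 ≤ θ * ((k : ℝ) + k₀ + 1))
    (hρmono : ∀ k : ℕ, 2 ≤ k → k ≤ t - 1 →
      (θ * ((k : ℝ) + k₀ + 2) - 1) / ρ k ≤ (θ * ((k : ℝ) + k₀ + 1) - 1) / ρ (k - 1))
    (hρt : ((t : ℝ) + k₀ + 1) / ρ t ≤ (θ * ((t : ℝ) + k₀ + 1) - 1) / ρ (t - 1))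
    (lamseq : ℕ → EuclideanSpace ℝ (Fin p)) (lam : EuclideanSpace ℝ (Fin p)) :
    -(((t : ℝ) + k₀ + 1) / ρ t) * Delta (lamseq (t + 1)) (lamseq t) lam
      - (∑ k ∈ Finset.Icc 2 t, (θ * ((k : ℝ) + k₀ + 1) - 1) / ρ (k - 1) *
            Delta (lamseq k) (lamseq (k - 1)) lam)
    ≤ (θ * (k₀ + 3) - 1) / (2 * ρ 1) * ‖lamseq 1 - lam‖ ^ 2 :=
  stmt_10_general t ht θ hθ0 k₀ ρ hρpos hθk hρmono hρt lamseq lam
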